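/- Let 𝔬_ℓ be a finite quotient of a complete discrete valuation ring and let A = diag(A₁, A₂), B = diag(B₁, B₂) ∈ gl_d(𝔬_ℓ) be block-diagonal matrices such that the residue-field characteristic polynomials of A₁ and A₂ are coprime (and similarly those of B₁ and B₂, with A_i and B_i having the same residue-field characteristic polynomials). Then A and B are conjugate under GL_d(𝔬_ℓ) if and only if A₁ is conjugate to B₁ under GL_{d₁}(𝔬_ℓ) and A₂ is conjugate to B₂ under GL_{d₂}(𝔬_ℓ). -/

import Mathlib

/-!
If `X * A = B * X` then `X * p(A) = p(B) * X` for every polynomial `p`; taking `p = χ_A` gives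
`χ_A(B) * X = 0`. When the residue-field characteristic polynomials of `A` and `B` are coprime,
`χ_A(B)` is invertible modulo the maximal ideal, hence invertible, so `X = 0`. Applied to the
off-diagonal blocks of a conjugating matrix, this forces it to be block diagonal.
-/

open Matrix Polynomial

theorem isLocalHom_of_surjective_comp {R S T : Type*} [Semiring R] [Semiring S] [Semiring T]
    {f : R →+* S} (hf : Function.Surjective f) (g : S →+* T) [IsLocalHom (g.comp f)] :
    IsLocalHom g where
  map_nonunit y hy := by
    obtain ⟨x, rfl⟩ := hf y
    exact (isUnit_of_map_unit (g.comp f) x hy).map f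

theorem Polynomial.isUnit_aeval_of_isCoprime {R A : Type*} [CommSemiring R] [Semiring A]
    [Algebra R A] {p q : R[X]} (hpq : IsCoprime p q) {a : A} (hp : aeval a p = 0) :
    IsUnit (aeval a q) := by
  obtain ⟨u, v, huv⟩ := hpq
  have hvq : aeval a v * aeval a q = 1 := by
    simpa [hp] using congrArg (aeval a) huv
  refine isUnit_iff_exists.mpr ⟨aeval a v, ?_, hvq⟩
  rwa [← map_mul, mul_comm, map_mul]

namespace Matrix

variable {m n K S : Type*} [Fintype m] [Fintype n] [DecidableEq m] [DecidableEq n]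

theorem mul_aeval_eq_aeval_mul [CommSemiring S] {A : Matrix n n S} {B : Matrix m m S}
    {X : Matrix m n S} (h : X * A = B * X) (p : S[X]) :
    X * aeval A p = aeval B p * X := by
  have hpow : ∀ k : ℕ, X * A ^ k = B ^ k * X := by
    intro k
    induction k with
    | zero => simp
    | succ k ih => rw [pow_succ, ← Matrix.mul_assoc, ih, Matrix.mul_assoc, h,
        ← Matrix.mul_assoc, ← pow_succ]
  simp only [aeval_eq_sum_range, Matrix.mul_sum, Matrix.sum_mul, Matrix.mul_smul,
    Matrix.smul_mul, hpow]

theorem map_aeval [CommSemiring S] [CommSemiring K] (r : S →+* K) (M : Matrix n n S) (p : S[X]) :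
    (aeval M p).map r = aeval (M.map r) (p.map r) :=
  map_aeval_eq_aeval_map (ψ := r.mapMatrix)
    (by ext; simp [algebraMap_matrix_apply, apply_ite r]) p M

theorem isUnit_of_isUnit_map [CommRing S] [CommRing K] (r : S →+* K) [IsLocalHom r]
    {M : Matrix n n S} (h : IsUnit (M.map r)) : IsUnit M := by
  rw [isUnit_iff_isUnit_det] at h ⊢
  exact isUnit_of_map_unit r _ (r.map_det M ▸ h)

theorem eq_zero_of_mul_eq_mul_of_isCoprime_charpoly [CommRing S] [CommRing K] (r : S →+* K)
    [IsLocalHom r] {A : Matrix n n S} {B : Matrix m m S}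
    (hcop : IsCoprime (B.map r).charpoly (A.map r).charpoly) {X : Matrix m n S}
    (h : X * A = B * X) : X = 0 := by
  have hunit : IsUnit (aeval B A.charpoly) := by
    refine isUnit_of_isUnit_map r ?_
    rw [map_aeval, ← charpoly_map]
    exact isUnit_aeval_of_isCoprime hcop (aeval_self_charpoly _)
  have hcharpoly_mul : aeval B A.charpoly * X = 0 := by
    rw [← mul_aeval_eq_aeval_mul h, aeval_self_charpoly, Matrix.mul_zero]
  calc X = (aeval B A.charpoly)⁻¹ * (aeval B A.charpoly * X) :=
        (nonsing_inv_mul_cancel_left _ X ((isUnit_iff_isUnit_det _).mp hunit)).symm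
    _ = 0 := by rw [hcharpoly_mul, Matrix.mul_zero]

theorem exists_units_conj_fromBlocks_iff [CommRing S] {A₁ B₁ : Matrix m m S}
    {A₂ B₂ : Matrix n n S} (h₁₂ : ∀ X : Matrix m n S, X * A₂ = B₁ * X → X = 0)
    (h₂₁ : ∀ X : Matrix n m S, X * A₁ = B₂ * X → X = 0) :
    (∃ g : (Matrix (m ⊕ n) (m ⊕ n) S)ˣ,
        (g : Matrix (m ⊕ n) (m ⊕ n) S) * fromBlocks A₁ 0 0 A₂ = fromBlocks B₁ 0 0 B₂ * g) ↔
      (∃ g₁ : (Matrix m m S)ˣ, (g₁ : Matrix m m S) * A₁ = B₁ * g₁) ∧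
      (∃ g₂ : (Matrix n n S)ˣ, (g₂ : Matrix n n S) * A₂ = B₂ * g₂) := by
  constructor
  · rintro ⟨g, hg⟩
    obtain ⟨V₁₁, V₁₂, V₂₁, V₂₂, hV⟩ : ∃ V₁₁ V₁₂ V₂₁ V₂₂, (g : Matrix (m ⊕ n) (m ⊕ n) S) =
        fromBlocks V₁₁ V₁₂ V₂₁ V₂₂ := ⟨_, _, _, _, (fromBlocks_toBlocks _).symm⟩
    rw [hV, fromBlocks_multiply, fromBlocks_multiply, fromBlocks_inj] at hg
    simp only [Matrix.mul_zero, Matrix.zero_mul, add_zero, zero_add] at hg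
    obtain ⟨h₁₁, h₁₂', h₂₁', h₂₂⟩ := hg
    rw [h₁₂ V₁₂ h₁₂', h₂₁ V₂₁ h₂₁'] at hV
    obtain ⟨hV₁₁, hV₂₂⟩ := isUnit_fromBlocks_zero₂₁.mp (hV ▸ g.isUnit)
    exact ⟨⟨hV₁₁.unit, h₁₁⟩, ⟨hV₂₂.unit, h₂₂⟩⟩
  · rintro ⟨⟨g₁, hg₁⟩, ⟨g₂, hg₂⟩⟩
    have hg : IsUnit (fromBlocks (g₁ : Matrix m m S) 0 0 (g₂ : Matrix n n S)) :=
      isUnit_fromBlocks_zero₂₁.mpr ⟨g₁.isUnit, g₂.isUnit⟩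
    refine ⟨hg.unit, ?_⟩
    simp only [IsUnit.unit_spec, fromBlocks_multiply, Matrix.mul_zero, Matrix.zero_mul,
      add_zero, zero_add, hg₁, hg₂]

end Matrix

theorem block_diagonal_conjugacy_general
    (O : Type*) [CommRing O] [IsDomain O] [IsDiscreteValuationRing O]
    (R : Type*) [CommRing R] (q : O →+* R) (hq : Function.Surjective q)
    (r : R →+* O ⧸ IsLocalRing.maximalIdeal O)
    (hr : r.comp q = Ideal.Quotient.mk (IsLocalRing.maximalIdeal O))
    (d₁ d₂ : ℕ)
    (A₁ B₁ : Matrix (Fin d₁) (Fin d₁) R) (A₂ B₂ : Matrix (Fin d₂) (Fin d₂) R)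
    (hcopB : IsCoprime ((B₁.map r).charpoly) ((B₂.map r).charpoly))
    (hsame₁ : (A₁.map r).charpoly = (B₁.map r).charpoly)
    (hsame₂ : (A₂.map r).charpoly = (B₂.map r).charpoly) :
    (∃ g : (Matrix (Fin d₁ ⊕ Fin d₂) (Fin d₁ ⊕ Fin d₂) R)ˣ,
        (g : Matrix (Fin d₁ ⊕ Fin d₂) (Fin d₁ ⊕ Fin d₂) R) *
            Matrix.fromBlocks A₁ 0 0 A₂ =
          Matrix.fromBlocks B₁ 0 0 B₂ *
            (g : Matrix (Fin d₁ ⊕ Fin d₂) (Fin d₁ ⊕ Fin d₂) R)) ↔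
      (∃ g₁ : (Matrix (Fin d₁) (Fin d₁) R)ˣ,
          (g₁ : Matrix (Fin d₁) (Fin d₁) R) * A₁ = B₁ * g₁) ∧
      (∃ g₂ : (Matrix (Fin d₂) (Fin d₂) R)ˣ,
          (g₂ : Matrix (Fin d₂) (Fin d₂) R) * A₂ = B₂ * g₂) := by
  have : IsLocalHom (r.comp q) := hr ▸ inferInstanceAs (IsLocalHom (IsLocalRing.residue O))
  have : IsLocalHom r := isLocalHom_of_surjective_comp hq r
  exact exists_units_conj_fromBlocks_iff
    (fun _ ↦ eq_zero_of_mul_eq_mul_of_isCoprime_charpoly r (hsame₂ ▸ hcopB))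
    (fun _ ↦ eq_zero_of_mul_eq_mul_of_isCoprime_charpoly r (hsame₁ ▸ hcopB.symm))

theorem block_diagonal_conjugacy
    (O : Type*) [CommRing O] [IsDomain O] [IsDiscreteValuationRing O]
    [Finite (IsLocalRing.ResidueField O)]
    (ℓ : ℕ) (hℓ : 1 ≤ ℓ)
    (R : Type*) [CommRing R] (q : O →+* R) (hq : Function.Surjective q)
    (hker : RingHom.ker q = IsLocalRing.maximalIdeal O ^ ℓ)
    (r : R →+* O ⧸ IsLocalRing.maximalIdeal O)
    (hr : r.comp q = Ideal.Quotient.mk (IsLocalRing.maximalIdeal O))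
    (d₁ d₂ : ℕ)
    (A₁ B₁ : Matrix (Fin d₁) (Fin d₁) R) (A₂ B₂ : Matrix (Fin d₂) (Fin d₂) R)
    (hcopA : IsCoprime ((A₁.map r).charpoly) ((A₂.map r).charpoly))
    (hcopB : IsCoprime ((B₁.map r).charpoly) ((B₂.map r).charpoly))
    (hsame₁ : (A₁.map r).charpoly = (B₁.map r).charpoly)
    (hsame₂ : (A₂.map r).charpoly = (B₂.map r).charpoly) :
    (∃ g : (Matrix (Fin d₁ ⊕ Fin d₂) (Fin d₁ ⊕ Fin d₂) R)ˣ,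
        (g : Matrix (Fin d₁ ⊕ Fin d₂) (Fin d₁ ⊕ Fin d₂) R) *
            Matrix.fromBlocks A₁ 0 0 A₂ =
          Matrix.fromBlocks B₁ 0 0 B₂ *
            (g : Matrix (Fin d₁ ⊕ Fin d₂) (Fin d₁ ⊕ Fin d₂) R)) ↔
      (∃ g₁ : (Matrix (Fin d₁) (Fin d₁) R)ˣ,
          (g₁ : Matrix (Fin d₁) (Fin d₁) R) * A₁ = B₁ * g₁) ∧
      (∃ g₂ : (Matrix (Fin d₂) (Fin d₂) R)ˣ,
          (g₂ : Matrix (Fin d₂) (Fin d₂) R) * A₂ = B₂ * g₂) :=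
  block_diagonal_conjugacy_general O R q hq r hr d₁ d₂ A₁ B₁ A₂ B₂ hcopB hsame₁ hsame₂
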